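/- Let x₁, x₂, …, x_T be i.i.d. random vectors in ℝ^d with ‖x_τ‖_∞ ≤ 1 almost surely for all τ, let Σ = E[x_τ x_τᵀ] and Σ̂_t = (1/t)·Σ_{τ=1}^t x_τ x_τᵀ for each t ≤ T. Let β ∈ ℝ^d with ‖β‖₀ = s₀, suppose Σ ∈ C(supp(β), φ) for some φ > 0, and set c = min(0.5, φ²/(256·s₀)). Fix δ' ∈ (0,1) and let z_T = max( (3/c²)·log d, (1/c²)·log(T²/δ') ). Then with probability at least 1 − δ', for every t with z_T ≤ t ≤ T, Σ̂_t ∈ C(supp(β), φ/√2). -/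

import Mathlib

/-!
Each entry of `Σ̂_t - Σ` is an average of `t` independent centred variables with values in an
interval of length `2`, so by Hoeffding it exceeds `8c` with probability at most
`2 exp(-32 t c²)`. The cone condition gives `‖v‖₁ ≤ 4 ‖v_I‖₁`, so if every entry is within
`8c ≤ φ² / (32 s₀)`, the quadratic forms of `Σ̂_t` and `Σ` differ by at most half of the
compatibility lower bound `φ² ‖v_I‖₁² / s₀`, and `Σ̂_t ∈ C(I, φ/√2)`. For `t ≥ z_T` a union bound
over the `d²` entries puts the failure probability below `δ'/T`, and a union bound over the at most
`T` admissible `t` gives `δ'`.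

When `d = T = 1` the choice of `z_T` does not make `2 exp(-32 c²)` small, but then `Σ̂_1 = x₁²` is
a variable in `[0, 1]` with mean at least `φ²`, so `x₁² ≥ φ²/2` with probability at least `φ²/2`,
and `z_T ≤ 1` forces `1 - δ' ≤ c² ≤ φ²/2`.
-/

open MeasureTheory ProbabilityTheory Real Finset Matrix

noncomputable section

/-- The L¹ norm of a vector in `ℝ^d`. -/
def l1Norm {d : ℕ} (v : Fin d → ℝ) : ℝ := ∑ i, |v i|

/-- The number of nonzero entries of a vector (the "L⁰ norm" `‖·‖₀`). -/
def l0Norm {d : ℕ} (v : Fin d → ℝ) : ℕ := (Finset.univ.filter (fun i => v i ≠ 0)).card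

/-- The support of a vector, as a `Finset` of indices. -/
def spt {d : ℕ} (v : Fin d → ℝ) : Finset (Fin d) := Finset.univ.filter (fun i => v i ≠ 0)

/-- The compatibility set `C(I, φ)`: the set of `d × d` real matrices `M` such that for every
`v ∈ ℝ^d` with `‖v_{Iᶜ}‖₁ ≤ 3 ‖v_I‖₁` one has `‖v_I‖₁² ≤ |I| (vᵀ M v) / φ²`. -/
def compatSet {d : ℕ} (I : Finset (Fin d)) (φ : ℝ) : Set (Matrix (Fin d) (Fin d) ℝ) :=
  {M | ∀ v : Fin d → ℝ,
    (∑ i ∈ Iᶜ, abs (v i)) ≤ 3 * (∑ i ∈ I, abs (v i)) →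
    (∑ i ∈ I, abs (v i)) ^ 2 ≤ (I.card : ℝ) * (v ⬝ᵥ M.mulVec v) / φ ^ 2}

theorem mem_compatSet_empty {d : ℕ} (φ : ℝ) (M : Matrix (Fin d) (Fin d) ℝ) :
    M ∈ compatSet ∅ φ := by
  intro v _
  simp

theorem abs_dotProduct_mulVec_sub_le {n : Type*} [Fintype n] {M S : Matrix n n ℝ} {ε : ℝ}
    (hMS : ∀ i j, |M i j - S i j| ≤ ε) (v : n → ℝ) :
    |v ⬝ᵥ M *ᵥ v - v ⬝ᵥ S *ᵥ v| ≤ ε * (∑ i, |v i|) ^ 2 := by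
  have hexpand : v ⬝ᵥ M *ᵥ v - v ⬝ᵥ S *ᵥ v = ∑ i, ∑ j, v i * (M i j - S i j) * v j := by
    simp only [dotProduct, mulVec, Finset.mul_sum, ← Finset.sum_sub_distrib]
    refine Finset.sum_congr rfl fun i _ => Finset.sum_congr rfl fun j _ => ?_
    ring
  rw [hexpand, sq, Finset.sum_mul_sum, Finset.mul_sum]
  refine (Finset.abs_sum_le_sum_abs _ _).trans (Finset.sum_le_sum fun i _ => ?_)
  rw [Finset.mul_sum]
  refine (Finset.abs_sum_le_sum_abs _ _).trans (Finset.sum_le_sum fun j _ => ?_)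
  calc |v i * (M i j - S i j) * v j| = |v i| * |M i j - S i j| * |v j| := by
        rw [abs_mul, abs_mul]
    _ ≤ |v i| * ε * |v j| := by gcongr; exact hMS i j
    _ = ε * (|v i| * |v j|) := by ring

theorem mem_compatSet_div_sqrt_two_of_abs_sub_le {d : ℕ} {I : Finset (Fin d)} {φ : ℝ}
    (hφ : 0 < φ) {S M : Matrix (Fin d) (Fin d) ℝ} (hS : S ∈ compatSet I φ)
    (hMS : ∀ i j, |M i j - S i j| ≤ φ ^ 2 / (32 * I.card)) :
    M ∈ compatSet I (φ / √2) := by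
  intro v hv
  set a := ∑ i ∈ I, |v i|
  set k : ℝ := (I.card : ℝ)
  have hl1 : ∑ i, |v i| ≤ 4 * a := by
    rw [← Finset.sum_add_sum_compl I]
    linarith
  have hl1_nonneg : 0 ≤ ∑ i, |v i| := Finset.sum_nonneg fun _ _ => abs_nonneg _
  have hk : k * (φ ^ 2 / (32 * k)) ≤ φ ^ 2 / 32 := by
    rcases eq_or_ne k 0 with h | h
    · rw [h, zero_mul]; positivity
    · exact (by field_simp : k * (φ ^ 2 / (32 * k)) = φ ^ 2 / 32).le
  have hS' : φ ^ 2 * a ^ 2 ≤ k * (v ⬝ᵥ S *ᵥ v) := by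
    have := hS v hv
    rwa [le_div_iff₀ (by positivity), mul_comm] at this
  have hdiff := abs_le.1 (abs_dotProduct_mulVec_sub_le hMS v)
  rw [div_pow, Real.sq_sqrt zero_le_two, le_div_iff₀ (by positivity)]
  have hk0 : 0 ≤ k := Nat.cast_nonneg _
  nlinarith [mul_le_mul_of_nonneg_left hdiff.1 hk0, pow_le_pow_left₀ hl1_nonneg hl1 2]

theorem mem_compatSet_univ_fin_one_iff {φ : ℝ} (hφ : 0 < φ) {M : Matrix (Fin 1) (Fin 1) ℝ} :
    M ∈ compatSet Finset.univ φ ↔ φ ^ 2 ≤ M 0 0 := by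
  simp only [compatSet, Set.mem_ofPred_eq, Finset.compl_univ, Finset.sum_empty, Fin.sum_univ_one,
    Finset.card_univ, Fintype.card_fin, Nat.cast_one, one_mul, dotProduct, mulVec]
  constructor
  · intro h
    have := h 1 (by positivity)
    simp only [Pi.one_apply, abs_one, one_pow, one_mul, mul_one] at this
    rwa [le_div_iff₀ (by positivity), one_mul] at this
  · intro h v _
    rw [le_div_iff₀ (by positivity), sq_abs]
    nlinarith [sq_nonneg (v 0)]

section Concentration

variable {Ω : Type*} {mΩ : MeasurableSpace Ω} {μ : Measure Ω}

theorem measureReal_le_abs_sum_le_of_iIndepFun [IsFiniteMeasure μ] {ι : Type*}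
    {X : ι → Ω → ℝ} (h_indep : iIndepFun X μ) {c : NNReal} {s : Finset ι}
    (h_subG : ∀ i ∈ s, HasSubgaussianMGF (X i) c μ) {ε : ℝ} (hε : 0 ≤ ε) :
    μ.real {ω | ε ≤ |∑ i ∈ s, X i ω|} ≤ 2 * exp (-ε ^ 2 / (2 * (s.card * c))) := by
  have h_upper := HasSubgaussianMGF.measure_sum_ge_le_of_iIndepFun h_indep h_subG hε
  have h_lower := HasSubgaussianMGF.measure_sum_ge_le_of_iIndepFun (X := fun i ω => -X i ω)
    (h_indep.comp (fun _ => Neg.neg) fun _ => measurable_neg) (fun i hi => (h_subG i hi).neg) hε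
  simp only [Finset.sum_const, nsmul_eq_mul, NNReal.coe_mul, NNReal.coe_natCast,
    Finset.sum_neg_distrib] at h_upper h_lower
  calc μ.real {ω | ε ≤ |∑ i ∈ s, X i ω|}
      ≤ μ.real ({ω | ε ≤ ∑ i ∈ s, X i ω} ∪ {ω | ε ≤ -∑ i ∈ s, X i ω}) :=
        measureReal_mono fun _ hω => by
          simpa only [Set.mem_union, Set.mem_ofPred_eq] using le_abs.1 hω
    _ ≤ _ := (measureReal_union_le _ _).trans (by linarith)

theorem measureReal_le_le_one_sub_integral_add [IsProbabilityMeasure μ] {Z : Ω → ℝ}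
    (hZ : Integrable Z μ) (hZ_le : ∀ᵐ ω ∂μ, Z ω ≤ 1) {a : ℝ} (ha : 0 ≤ a) :
    μ.real {ω | Z ω ≤ a} ≤ 1 - μ[Z] + a := by
  have h_markov := mul_meas_ge_le_integral_of_nonneg (f := fun ω => 1 - Z ω)
    (hZ_le.mono fun ω h => sub_nonneg.2 h) ((integrable_const 1).sub hZ) (1 - a)
  simp only [sub_le_sub_iff_left, integral_sub (integrable_const 1) hZ, integral_const,
    probReal_univ, smul_eq_mul, mul_one] at h_markov
  have h_le_one : μ.real {ω | Z ω ≤ a} ≤ 1 := measureReal_le_one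
  nlinarith

theorem ofReal_one_sub_le_of_measureReal_compl_le [IsProbabilityMeasure μ] {A : Set Ω} {δ : ℝ}
    (h : μ.real Aᶜ ≤ δ) : ENNReal.ofReal (1 - δ) ≤ μ A := by
  have h_cover : 1 ≤ μ.real A + μ.real Aᶜ := by
    simpa [Set.union_compl_self] using measureReal_union_le (μ := μ) A Aᶜ
  exact ENNReal.ofReal_le_of_le_toReal (by rw [← measureReal_def]; linarith)

end Concentration

theorem sq_mul_two_mul_exp_neg_le {d T : ℕ} {δ a : ℝ} (hd : 0 < d) (hT : 0 < T) (hδ : 0 < δ)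
    (hdT : 2 ≤ d * T) (hd_log : 3 * log d ≤ a) (hT_log : log (T ^ 2 / δ) ≤ a) :
    (d : ℝ) ^ 2 * (2 * exp (-(3 * a))) ≤ δ / T := by
  have hd1 : (1 : ℝ) ≤ d := by exact_mod_cast hd
  have hT0 : (0 : ℝ) < T := by exact_mod_cast hT
  set e := exp (-a)
  have he : exp (-(3 * a)) = e ^ 3 := by rw [← exp_nat_mul]; ring_nf
  have hde : (d : ℝ) ^ 3 * e ≤ 1 := by
    rw [← exp_log (by positivity : (0 : ℝ) < d ^ 3), ← exp_add, exp_le_one_iff, log_pow]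
    push_cast
    linarith
  have hTe : (T : ℝ) ^ 2 * e ≤ δ := by
    have h : T ^ 2 / δ * e ≤ 1 := by
      rw [← exp_log (by positivity : (0 : ℝ) < T ^ 2 / δ), ← exp_add, exp_le_one_iff]
      linarith
    rwa [div_mul_eq_mul_div, div_le_one hδ] at h
  have hdT' : (2 : ℝ) ≤ d ^ 4 * T := by
    have : (2 : ℝ) ≤ d * T := by exact_mod_cast hdT
    nlinarith [pow_le_pow_right₀ hd1 (by norm_num : 1 ≤ 4)]
  rw [he, le_div_iff₀ hT0]
  calc (d : ℝ) ^ 2 * (2 * e ^ 3) * T = 2 * (d ^ 2 * e ^ 3 * T) := by ring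
    _ ≤ (d ^ 4 * T) * (d ^ 2 * e ^ 3 * T) := by gcongr
    _ = (d ^ 3 * e) ^ 2 * (T ^ 2 * e) := by ring
    _ ≤ 1 ^ 2 * δ := by gcongr
    _ = δ := by ring

def empiricalGram {d : ℕ} (y : ℕ → Fin d → ℝ) (t : ℕ) : Matrix (Fin d) (Fin d) ℝ :=
  fun i j => (1 / t : ℝ) * ∑ τ ∈ Finset.Icc 1 t, y τ i * y τ j

theorem measureReal_empiricalGram_one_not_mem_compatSet_le {Ω : Type*} [MeasureSpace Ω]
    [IsProbabilityMeasure (ℙ : Measure Ω)] {x : ℕ → Ω → Fin 1 → ℝ} (hxmeas : Measurable (x 1))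
    (hxbdd : ∀ᵐ ω ∂(ℙ : Measure Ω), ∀ i, |x 1 ω i| ≤ 1) {Sig : Matrix (Fin 1) (Fin 1) ℝ}
    (hSig : Sig 0 0 = ∫ ω, x 1 ω 0 * x 1 ω 0 ∂(ℙ : Measure Ω)) {φ : ℝ} (hφ : 0 < φ)
    (hcompat : Sig ∈ compatSet Finset.univ φ) :
    (ℙ : Measure Ω).real {ω | empiricalGram (x · ω) 1 ∉ compatSet Finset.univ (φ / √2)}
      ≤ 1 - φ ^ 2 / 2 := by
  have hZ_le : ∀ᵐ ω ∂(ℙ : Measure Ω), x 1 ω 0 * x 1 ω 0 ≤ 1 := by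
    filter_upwards [hxbdd] with ω hω
    nlinarith [abs_le.1 (hω 0), abs_nonneg (x 1 ω 0)]
  have hZ_int : Integrable (fun ω => x 1 ω 0 * x 1 ω 0) ℙ := by
    refine Integrable.of_bound (C := 1) (by fun_prop) ?_
    filter_upwards [hZ_le] with ω hω
    rw [Real.norm_eq_abs, abs_of_nonneg (mul_self_nonneg _)]
    exact hω
  have hSig_ge := (mem_compatSet_univ_fin_one_iff hφ).1 hcompat
  calc _ ≤ (ℙ : Measure Ω).real {ω | x 1 ω 0 * x 1 ω 0 ≤ φ ^ 2 / 2} := by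
        refine measureReal_mono fun ω hω => ?_
        simp only [Set.mem_ofPred_eq, mem_compatSet_univ_fin_one_iff (by positivity : 0 < φ / √2),
          div_pow, Real.sq_sqrt zero_le_two, not_le, empiricalGram] at hω ⊢
        simpa using hω.le
    _ ≤ 1 - Sig 0 0 + φ ^ 2 / 2 :=
        hSig ▸ measureReal_le_le_one_sub_integral_add hZ_int hZ_le (by positivity)
    _ ≤ 1 - φ ^ 2 / 2 := by linarith

section EmpiricalGram

variable {Ω : Type*} [MeasureSpace Ω] [IsProbabilityMeasure (ℙ : Measure Ω)] {d T : ℕ}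
  {x : ℕ → Ω → Fin d → ℝ} {Sig : Matrix (Fin d) (Fin d) ℝ}

theorem measureReal_le_abs_empiricalGram_sub_le (hxmeas : ∀ τ, Measurable (x τ))
    (hxindep : iIndepFun (fun τ : (Finset.Icc 1 T : Finset ℕ) => x τ) ℙ)
    (hxbdd : ∀ τ ∈ Finset.Icc 1 T, ∀ᵐ ω ∂(ℙ : Measure Ω), ∀ i, |x τ ω i| ≤ 1)
    (hSig : ∀ τ ∈ Finset.Icc 1 T, ∀ i j, Sig i j = ∫ ω, x τ ω i * x τ ω j ∂(ℙ : Measure Ω))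
    {t : ℕ} (ht : t ∈ Finset.Icc 1 T) {ε : ℝ} (hε : 0 ≤ ε) (i j : Fin d) :
    (ℙ : Measure Ω).real {ω | ε ≤ |empiricalGram (x · ω) t i j - Sig i j|}
      ≤ 2 * exp (-(t * ε ^ 2 / 2)) := by
  obtain ⟨ht1, htT⟩ := Finset.mem_Icc.1 ht
  set Y : (Finset.Icc 1 T : Finset ℕ) → Ω → ℝ := fun τ ω => x τ ω i * x τ ω j - Sig i j
  have hY_indep : iIndepFun Y ℙ :=
    hxindep.comp (fun _ v => v i * v j - Sig i j) fun _ => by fun_prop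
  have hY_subG : ∀ τ, HasSubgaussianMGF (Y τ) 1 ℙ := by
    intro τ
    have h_mem : ∀ᵐ ω ∂(ℙ : Measure Ω), x τ ω i * x τ ω j ∈ Set.Icc (-1) 1 := by
      filter_upwards [hxbdd τ τ.2] with ω hω
      rw [Set.mem_Icc, ← abs_le, abs_mul]
      exact mul_le_one₀ (hω i) (abs_nonneg _) (hω j)
    have h := hasSubgaussianMGF_of_mem_Icc (by fun_prop) h_mem
    rw [← hSig τ τ.2 i j] at h
    convert h
    norm_num
  set s := (Finset.Icc 1 t).subtype (· ∈ Finset.Icc 1 T)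
  have hs_mem : ∀ τ ∈ Finset.Icc 1 t, τ ∈ Finset.Icc 1 T := fun τ hτ =>
    Finset.mem_Icc.2 ⟨(Finset.mem_Icc.1 hτ).1, (Finset.mem_Icc.1 hτ).2.trans htT⟩
  have hs_card : (s.card : ℝ) = t := by
    rw [Finset.card_subtype, Finset.filter_true_of_mem hs_mem, Nat.card_Icc, Nat.add_sub_cancel]
  have ht0 : (0 : ℝ) < t := by exact_mod_cast ht1
  have h_hoeffding := measureReal_le_abs_sum_le_of_iIndepFun hY_indep (s := s)
    (fun τ _ => hY_subG τ) (mul_nonneg ht0.le hε)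
  refine le_trans (measureReal_mono ?_) (h_hoeffding.trans_eq ?_)
  · intro ω hω
    have h_sum : ∑ τ ∈ s, Y τ ω = t * (empiricalGram (x · ω) t i j - Sig i j) := by
      rw [Finset.sum_subtype_of_mem (fun τ => x τ ω i * x τ ω j - Sig i j) hs_mem,
        Finset.sum_sub_distrib, Finset.sum_const, Nat.card_Icc, Nat.add_sub_cancel,
        nsmul_eq_mul, empiricalGram]
      field_simp
    simp only [Set.mem_ofPred_eq, h_sum, abs_mul, abs_of_pos ht0] at hω ⊢
    exact mul_le_mul_of_nonneg_left hω ht0.le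
  · rw [hs_card, NNReal.coe_one, mul_one]
    congr 2
    field_simp

theorem measureReal_empiricalGram_not_mem_compatSet_le_sq_mul_exp
    (hxmeas : ∀ τ, Measurable (x τ))
    (hxindep : iIndepFun (fun τ : (Finset.Icc 1 T : Finset ℕ) => x τ) ℙ)
    (hxbdd : ∀ τ ∈ Finset.Icc 1 T, ∀ᵐ ω ∂(ℙ : Measure Ω), ∀ i, |x τ ω i| ≤ 1)
    (hSig : ∀ τ ∈ Finset.Icc 1 T, ∀ i j, Sig i j = ∫ ω, x τ ω i * x τ ω j ∂(ℙ : Measure Ω))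
    {I : Finset (Fin d)} {φ : ℝ} (hφ : 0 < φ) (hcompat : Sig ∈ compatSet I φ)
    {t : ℕ} (ht : t ∈ Finset.Icc 1 T) {ε : ℝ} (hε : 0 ≤ ε) (hεφ : ε ≤ φ ^ 2 / (32 * I.card)) :
    (ℙ : Measure Ω).real {ω | empiricalGram (x · ω) t ∉ compatSet I (φ / √2)}
      ≤ d ^ 2 * (2 * exp (-(t * ε ^ 2 / 2))) := by
  calc _ ≤ (ℙ : Measure Ω).real
        (⋃ i, ⋃ j, {ω | ε ≤ |empiricalGram (x · ω) t i j - Sig i j|}) := by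
        refine measureReal_mono fun ω hω => ?_
        by_contra h_close
        simp only [Set.mem_iUnion, Set.mem_ofPred_eq, not_exists, not_le] at h_close
        exact hω (mem_compatSet_div_sqrt_two_of_abs_sub_le hφ hcompat
          fun i j => (h_close i j).le.trans hεφ)
    _ ≤ ∑ i, ∑ j, (ℙ : Measure Ω).real {ω | ε ≤ |empiricalGram (x · ω) t i j - Sig i j|} :=
        (measureReal_iUnion_fintype_le _).trans
          (Finset.sum_le_sum fun i _ => measureReal_iUnion_fintype_le _)
    _ ≤ ∑ _i : Fin d, ∑ _j : Fin d, 2 * exp (-(t * ε ^ 2 / 2)) := by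
        gcongr with i _ j _
        exact measureReal_le_abs_empiricalGram_sub_le hxmeas hxindep hxbdd hSig ht hε i j
    _ = d ^ 2 * (2 * exp (-(t * ε ^ 2 / 2))) := by
        simp only [Finset.sum_const, Finset.card_univ, Fintype.card_fin, nsmul_eq_mul]
        ring

theorem measureReal_empiricalGram_not_mem_compatSet_le_div (hxmeas : ∀ τ, Measurable (x τ))
    (hxindep : iIndepFun (fun τ : (Finset.Icc 1 T : Finset ℕ) => x τ) ℙ)
    (hxbdd : ∀ τ ∈ Finset.Icc 1 T, ∀ᵐ ω ∂(ℙ : Measure Ω), ∀ i, |x τ ω i| ≤ 1)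
    (hSig : ∀ τ ∈ Finset.Icc 1 T, ∀ i j, Sig i j = ∫ ω, x τ ω i * x τ ω j ∂(ℙ : Measure Ω))
    {I : Finset (Fin d)} (hI : 0 < I.card) {φ : ℝ} (hφ : 0 < φ) (hcompat : Sig ∈ compatSet I φ)
    {c δ : ℝ} (hδ : 0 < δ) (hc0 : 0 ≤ c) (hc_half : c ≤ 1 / 2) (hcφ : c ≤ φ ^ 2 / (256 * I.card))
    {t : ℕ} (ht : t ∈ Finset.Icc 1 T) (hd_log : 3 * log d ≤ t * c ^ 2)
    (hT_log : log (T ^ 2 / δ) ≤ t * c ^ 2) :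
    (ℙ : Measure Ω).real {ω | empiricalGram (x · ω) t ∉ compatSet I (φ / √2)} ≤ δ / T := by
  obtain ⟨ht1, htT⟩ := Finset.mem_Icc.1 ht
  have hd : 0 < d := (Finset.card_pos.1 hI).choose.pos
  rcases Nat.lt_or_ge 1 (d * T) with hdT | hdT
  · have h8c : 8 * c ≤ φ ^ 2 / (32 * I.card) := by
      rw [show φ ^ 2 / (32 * (I.card : ℝ)) = 8 * (φ ^ 2 / (256 * I.card)) by field_simp; ring]
      linarith
    refine (measureReal_empiricalGram_not_mem_compatSet_le_sq_mul_exp hxmeas hxindep hxbdd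
      hSig hφ hcompat ht (by positivity) h8c).trans (le_trans ?_
        (sq_mul_two_mul_exp_neg_le hd (by omega) hδ hdT hd_log hT_log))
    gcongr
    nlinarith [sq_nonneg c, (Nat.cast_nonneg t : (0 : ℝ) ≤ t)]
  -- Only `d = T = 1` is left, where the union bound is too weak and a reverse Markov bound is used.
  obtain ⟨rfl, rfl⟩ : d = 1 ∧ T = 1 := ⟨by nlinarith, by nlinarith⟩
  obtain rfl : t = 1 := by omega
  have hI_univ : I = Finset.univ := Finset.eq_univ_of_card _ (le_antisymm
    (Finset.card_le_univ I) (by simpa using hI))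
  subst hI_univ
  have h1δ : 1 - δ ≤ c ^ 2 := by
    have := one_sub_inv_le_log_of_pos (inv_pos.2 hδ)
    simp only [Nat.cast_one, one_pow, one_div, one_mul, inv_inv] at hT_log this
    linarith
  simp only [Finset.card_univ, Fintype.card_fin, Nat.cast_one, mul_one] at hcφ
  refine (measureReal_empiricalGram_one_not_mem_compatSet_le (hxmeas 1) (hxbdd 1 (by simp))
    (hSig 1 (by simp) 0 0) hφ hcompat).trans ?_
  rw [Nat.cast_one, div_one]
  nlinarith

end EmpiricalGram

theorem stmt3_general
    {Ω : Type*} [MeasureSpace Ω] [IsProbabilityMeasure (ℙ : Measure Ω)]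
    (d T : ℕ) (hT : 0 < T)
    (x : ℕ → Ω → Fin d → ℝ) (hxmeas : ∀ τ, Measurable (x τ))
    (hxindep : iIndepFun
      (fun τ : (Finset.Icc 1 T : Finset ℕ) => x τ) ℙ)
    (hxbdd : ∀ τ ∈ Finset.Icc 1 T, ∀ᵐ ω ∂(ℙ : Measure Ω), ∀ i, |x τ ω i| ≤ 1)
    (β : Fin d → ℝ) (s₀ : ℕ) (hs₀ : l0Norm β = s₀)
    (Sig : Matrix (Fin d) (Fin d) ℝ)
    (hSig : ∀ τ ∈ Finset.Icc 1 T, ∀ i j, Sig i j = ∫ ω, x τ ω i * x τ ω j ∂(ℙ : Measure Ω))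
    (φ : ℝ) (hφ : 0 < φ)
    (hcompat : Sig ∈ compatSet (spt β) φ)
    (c : ℝ) (hc : c = min 0.5 (φ ^ 2 / (256 * s₀)))
    (δ' : ℝ) (hδ' : δ' ∈ Set.Ioo (0 : ℝ) 1)
    (zT : ℝ) (hzT : zT = max ((3 / c ^ 2) * Real.log d) ((1 / c ^ 2) * Real.log (T ^ 2 / δ'))) :
    ENNReal.ofReal (1 - δ') ≤
      ℙ {ω | ∀ t : ℕ, zT ≤ (t : ℝ) → t ≤ T →
        (fun i j => (1 / t : ℝ) * ∑ τ ∈ Finset.Icc 1 t, x τ ω i * x τ ω j)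
          ∈ compatSet (spt β) (φ / Real.sqrt 2)} := by
  obtain ⟨hδ0, hδ1⟩ := hδ'
  have hI : (spt β).card = s₀ := hs₀
  rcases Nat.eq_zero_or_pos s₀ with hs0 | hs0
  · have h_all (M : Matrix (Fin d) (Fin d) ℝ) : M ∈ compatSet (spt β) (φ / √2) :=
      Finset.card_eq_zero.1 (hI.trans hs0) ▸ mem_compatSet_empty _ M
    calc ENNReal.ofReal (1 - δ') ≤ ℙ Set.univ := by
          rw [measure_univ]; exact ENNReal.ofReal_le_one.2 (by linarith)
      _ ≤ _ := measure_mono fun ω _ => by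
          simp only [Set.mem_ofPred_eq]
          exact fun t _ _ => h_all _
  have hc0 : 0 < c := hc ▸ lt_min (by norm_num) (by positivity)
  have hc_half : c ≤ 1 / 2 := hc ▸ (min_le_left _ _).trans_eq (by norm_num)
  have hcφ : c ≤ φ ^ 2 / (256 * (spt β).card) := hI ▸ hc ▸ min_le_right _ _
  have hzT0 : 0 < zT := hzT ▸ lt_max_of_lt_right (mul_pos (by positivity) (log_pos (by
    rw [lt_div_iff₀ hδ0]; nlinarith [(Nat.one_le_cast.2 hT : (1 : ℝ) ≤ T)])))
  have h_log : ∀ t : ℕ, zT ≤ t → 3 * log d ≤ t * c ^ 2 ∧ log (T ^ 2 / δ') ≤ t * c ^ 2 := by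
    intro t ht
    have h1 := (le_max_left _ _).trans (hzT ▸ ht)
    have h2 := (le_max_right _ _).trans (hzT ▸ ht)
    rw [div_mul_eq_mul_div, div_le_iff₀ (by positivity)] at h1 h2
    exact ⟨h1, by linarith⟩
  set K := (Finset.Icc 1 T).filter (fun t : ℕ => zT ≤ t)
  apply ofReal_one_sub_le_of_measureReal_compl_le
  calc _ ≤ (ℙ : Measure Ω).real
        (⋃ t ∈ K, {ω | empiricalGram (x · ω) t ∉ compatSet (spt β) (φ / √2)}) := by
        refine measureReal_mono (fun ω hω => ?_) (measure_ne_top _ _)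
        simp only [Set.mem_compl_iff, Set.mem_ofPred_eq, not_forall] at hω
        obtain ⟨t, hzt, htT, ht⟩ := hω
        have ht1 : 1 ≤ t := by exact_mod_cast hzT0.trans_le hzt
        exact Set.mem_biUnion (Finset.mem_filter.2 ⟨Finset.mem_Icc.2 ⟨ht1, htT⟩, hzt⟩) ht
    _ ≤ ∑ t ∈ K, (ℙ : Measure Ω).real
        {ω | empiricalGram (x · ω) t ∉ compatSet (spt β) (φ / √2)} :=
        measureReal_biUnion_finset_le _ _
    _ ≤ ∑ _t ∈ K, δ' / T := Finset.sum_le_sum fun t ht => by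
        obtain ⟨htT, hzt⟩ := Finset.mem_filter.1 ht
        exact measureReal_empiricalGram_not_mem_compatSet_le_div hxmeas hxindep hxbdd hSig
          (hI ▸ hs0) hφ hcompat hδ0 hc0.le hc_half hcφ htT (h_log t hzt).1 (h_log t hzt).2
    _ ≤ δ' := by
        have hK : (K.card : ℝ) ≤ T := by
          exact_mod_cast (Finset.card_filter_le _ _).trans (by simp)
        rw [Finset.sum_const, nsmul_eq_mul, mul_div_assoc', div_le_iff₀ (by positivity)]
        nlinarith

/-- **Corollary 3.4: uniform compatibility of the empirical Gram matrices.** With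
`x₁, …, x_T` i.i.d., `‖x_τ‖_∞ ≤ 1` a.s., `Σ = E[x_τ x_τᵀ] ∈ C(supp β, φ)`,
`c = min(0.5, φ²/(256 s₀))` and `z_T = max((3/c²) log d, (1/c²) log(T²/δ'))`, with
probability at least `1 - δ'` we have `Σ̂_t ∈ C(supp β, φ/√2)` for all `z_T ≤ t ≤ T`. -/
theorem stmt3
    {Ω : Type*} [MeasureSpace Ω] [IsProbabilityMeasure (ℙ : Measure Ω)]
    (d T : ℕ) (hd : 0 < d) (hT : 0 < T)
    (x : ℕ → Ω → Fin d → ℝ) (hxmeas : ∀ τ, Measurable (x τ))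
    (hxindep : iIndepFun
      (fun τ : (Finset.Icc 1 T : Finset ℕ) => x τ) ℙ)
    (hxident : ∀ τ τ' : ℕ, τ ∈ Finset.Icc 1 T → τ' ∈ Finset.Icc 1 T →
      Measure.map (x τ) ℙ = Measure.map (x τ') ℙ)
    (hxbdd : ∀ τ ∈ Finset.Icc 1 T, ∀ᵐ ω ∂(ℙ : Measure Ω), ∀ i, |x τ ω i| ≤ 1)
    (β : Fin d → ℝ) (s₀ : ℕ) (hs₀ : l0Norm β = s₀)
    (Sig : Matrix (Fin d) (Fin d) ℝ)
    (hSig : ∀ τ ∈ Finset.Icc 1 T, ∀ i j, Sig i j = ∫ ω, x τ ω i * x τ ω j ∂(ℙ : Measure Ω))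
    (φ : ℝ) (hφ : 0 < φ)
    (hcompat : Sig ∈ compatSet (spt β) φ)
    (c : ℝ) (hc : c = min 0.5 (φ ^ 2 / (256 * s₀)))
    (δ' : ℝ) (hδ' : δ' ∈ Set.Ioo (0 : ℝ) 1)
    (zT : ℝ) (hzT : zT = max ((3 / c ^ 2) * Real.log d) ((1 / c ^ 2) * Real.log (T ^ 2 / δ'))) :
    ENNReal.ofReal (1 - δ') ≤
      ℙ {ω | ∀ t : ℕ, zT ≤ (t : ℝ) → t ≤ T →
        (fun i j => (1 / t : ℝ) * ∑ τ ∈ Finset.Icc 1 t, x τ ω i * x τ ω j)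
          ∈ compatSet (spt β) (φ / Real.sqrt 2)} :=
  stmt3_general d T hT x hxmeas hxindep hxbdd β s₀ hs₀ Sig hSig φ hφ hcompat c hc δ' hδ' zT hzT
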